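/- If in triangle ABC the cevians AA₁ and BB₁ are equal in length and intersect at a point lying on the median from C (the line through C and the midpoint of AB), then AC = BC. -/
import Mathlib

open EuclideanGeometry Real

noncomputable section

abbrev Pt : Type := EuclideanSpace ℝ (Fin 2)

lemma coeffs_eq_zero {A B C : Pt} (h : AffineIndependent ℝ ![A, B, C]) {α β : ℝ}
    (hz : α • (A - C) + β • (B - C) = 0) : α = 0 ∧ β = 0 := by
  have key := affineIndependent_iff.1 h Finset.univ ![α, β, -α - β]
    (by simp [Fin.sum_univ_three])
    (by
      simp only [Fin.sum_univ_three, Matrix.cons_val_zero, Matrix.cons_val_one, Matrix.head_cons,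
        Matrix.cons_val_two, Matrix.tail_cons]
      have h2 : α • (A - C) + β • (B - C) = α • A + β • B + (-α - β) • C := by
        simp only [smul_sub, sub_smul, neg_smul]; abel
      rw [← h2, hz])
  constructor
  · simpa using key 0 (Finset.mem_univ _)
  · simpa using key 1 (Finset.mem_univ _)

lemma norm_eq_of_equal_cevians {x : ℝ} (hx1 : x ≠ 1) (hxpos : 0 < x) (u v : Pt)
    (h : ‖u - x • v‖ = ‖v - x • u‖) : ‖u‖ = ‖v‖ := by
  have hsq : ‖u - x • v‖ ^ 2 = ‖v - x • u‖ ^ 2 := by rw [h]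
  rw [norm_sub_sq_real, norm_sub_sq_real, norm_smul, norm_smul, real_inner_smul_right,
    real_inner_smul_right, real_inner_comm v u,
    mul_pow, mul_pow, Real.norm_eq_abs, sq_abs] at hsq
  have hsq' : (1 - x ^ 2) * (‖u‖ ^ 2 - ‖v‖ ^ 2) = 0 := by linear_combination hsq
  have hx2 : (1 : ℝ) - x ^ 2 ≠ 0 := by
    intro h0
    have hfac : (1 - x) * (1 + x) = 0 := by linear_combination h0
    rcases mul_eq_zero.1 hfac with h' | h'
    · exact hx1 (by linarith)
    · linarith
  have hnorm : ‖u‖ ^ 2 = ‖v‖ ^ 2 := by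
    rcases mul_eq_zero.1 hsq' with h' | h'
    · exact absurd h' hx2
    · linarith
  nlinarith [norm_nonneg u, norm_nonneg v]

set_option maxHeartbeats 800000 in
theorem steiner_lehmus_median (A B C A₁ B₁ O : Pt)
    (hABC : AffineIndependent ℝ ![A, B, C])
    (hA₁ : A₁ ∈ affineSpan ℝ ({B, C} : Set Pt)) (hA₁B : A₁ ≠ B) (hA₁C : A₁ ≠ C)
    (hB₁ : B₁ ∈ affineSpan ℝ ({A, C} : Set Pt)) (hB₁A : B₁ ≠ A) (hB₁C : B₁ ≠ C)
    (hlen : dist A A₁ = dist B B₁)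
    (hO₁ : O ∈ segment ℝ A A₁) (hO₂ : O ∈ segment ℝ B B₁)
    (hmed : O ∈ affineSpan ℝ ({C, midpoint ℝ A B} : Set Pt)) :
    dist A C = dist B C := by
  obtain ⟨x, hx⟩ : ∃ x : ℝ, x • (B -ᵥ C) = A₁ -ᵥ C := by
    rw [← vadd_right_mem_affineSpan_pair]
    simpa using hA₁
  obtain ⟨y, hy⟩ : ∃ y : ℝ, y • (A -ᵥ C) = B₁ -ᵥ C := by
    rw [← vadd_right_mem_affineSpan_pair]
    simpa using hB₁
  obtain ⟨m, hm⟩ : ∃ m : ℝ, m • (midpoint ℝ A B -ᵥ C) = O -ᵥ C := by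
    rw [← vadd_left_mem_affineSpan_pair]
    simpa using hmed
  simp only [vsub_eq_sub] at hx hy hm
  obtain ⟨a, b, ha, hb, hab, hO⟩ := hO₁
  obtain ⟨c, d, hc, hd, hcd, hO'⟩ := hO₂
  have uniq : ∀ α β α' β' : ℝ,
      α • (A - C) + β • (B - C) = α' • (A - C) + β' • (B - C) → α = α' ∧ β = β' := by
    intro α β α' β' hEq
    have h0 : (α - α') • (A - C) + (β - β') • (B - C) = 0 := by
      rw [sub_smul, sub_smul]
      have := sub_eq_zero_of_eq hEq
      rw [← this]; abel
    obtain ⟨h1, h2⟩ := coeffs_eq_zero hABC h0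
    exact ⟨sub_eq_zero.1 h1, sub_eq_zero.1 h2⟩
  have hmid : (2 : ℝ) • (midpoint ℝ A B - C) = (A - C) + (B - C) := by
    rw [smul_sub, two_smul, midpoint_add_self, two_smul]
    abel
  have e1 : O - C = a • (A - C) + (b * x) • (B - C) := by
    have h2 : O - C = a • (A - C) + b • (A₁ - C) := by
      rw [← hO]
      nth_rewrite 1 [show C = a • C + b • C by rw [← add_smul, hab, one_smul]]
      rw [smul_sub, smul_sub]; abel
    rw [h2, ← hx, smul_smul]
  have e2 : O - C = (d * y) • (A - C) + c • (B - C) := by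
    have h2 : O - C = d • (B₁ - C) + c • (B - C) := by
      rw [← hO']
      nth_rewrite 1 [show C = c • C + d • C by rw [← add_smul, hcd, one_smul]]
      rw [smul_sub, smul_sub]; abel
    rw [h2, ← hy, smul_smul]
  have e3 : O - C = (m * 2⁻¹) • (A - C) + (m * 2⁻¹) • (B - C) := by
    rw [← hm, ← smul_add, ← hmid, smul_smul]
    congr 1
    ring
  obtain ⟨q1, q2⟩ := uniq _ _ _ _ (e1.symm.trans e3)
  obtain ⟨q3, q4⟩ := uniq _ _ _ _ (e2.symm.trans e3)
  have hx0 : x ≠ 0 := by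
    intro h; apply hA₁C
    rw [h, zero_smul] at hx
    rw [eq_comm, sub_eq_zero] at hx; exact hx
  have hx1 : x ≠ 1 := by
    intro h; apply hA₁B
    rw [h, one_smul] at hx
    exact (sub_left_inj.mp hx.symm)
  have hb0 : b ≠ 0 := by
    intro h
    have hm0 : m * 2⁻¹ = 0 := by rw [← q2, h, zero_mul]
    have ha' : a = 0 := by rw [q1, hm0]
    rw [ha', h] at hab; norm_num at hab
  have ha0 : a ≠ 0 := by
    intro h
    have hbx : b * x = 0 := by rw [q2, ← q1, h]
    rcases mul_eq_zero.1 hbx with h' | h'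
    · exact hb0 h'
    · exact hx0 h'
  have hbpos : 0 < b := lt_of_le_of_ne hb (Ne.symm hb0)
  have hapos : 0 < a := lt_of_le_of_ne ha (Ne.symm ha0)
  have hbd : b = d := by
    have hac : a = c := by rw [q1, q4]
    linarith
  have hxy : y = x := by
    have h1 : d * y = b * x := by rw [q3, ← q2]
    rw [← hbd] at h1
    exact mul_left_cancel₀ hb0 h1
  have hxpos : 0 < x := by
    have hbx : b * x = a := by rw [q2, ← q1]
    nlinarith
  have hAA₁ : A - A₁ = (A - C) - x • (B - C) := by
    rw [hx]; abel
  have hBB₁ : B - B₁ = (B - C) - x • (A - C) := by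
    rw [hxy] at hy
    rw [hy]; abel
  have hlen2 : ‖(A - C) - x • (B - C)‖ = ‖(B - C) - x • (A - C)‖ := by
    rw [← hAA₁, ← hBB₁, ← dist_eq_norm, ← dist_eq_norm]; exact hlen
  rw [dist_eq_norm, dist_eq_norm]
  exact norm_eq_of_equal_cevians hx1 hxpos (A - C) (B - C) hlen2
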